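/- For n >= 3 and q_1,...,q_n in [0,1], the dual linear program 'minimize sum_i q_i r_i subject to r_i >= 0 and sum_{i in I} r_i >= |I| - 1 for all I in M' attains its minimum value min{ ((n-2)/(n-1)) sum_i q_i, sum_i q_i - max_i q_i }, and the minimum over the feasible region is attained either at the point ((n-2)/(n-1),...,(n-2)/(n-1)) or at a 0-1 vector with exactly one zero coordinate. -/

import Mathlib

/-!
Put `t = 1 - r`. Feasibility of `r` says exactly that `∑_{i ∈ J} t i ≤ 1` for every proper
subset `J` (for `|J| ≤ 1` this is `r ≥ 0`). If moreover `∑ t ≤ 1`, then `∑ q i * t i ≤ max q`.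
Otherwise every `t j ≥ ∑ t - 1` (take `J` the complement of `j`), and writing
`t j = (∑ t - 1) + s j` with `s ≥ 0` bounds `∑ q i * t i` by a convex combination of
`∑ q / (n - 1)` and `max q`. So `∑ q i * r i ≥ ∑ q - max (∑ q / (n - 1)) (max q)`, which is the
claimed minimum; it is attained by the constant vector `(n - 2) / (n - 1)` or by the indicator of
the complement of a coordinate where `q` is maximal.
-/

open Finset

section

variable {ι : Type*} [Fintype ι]

def IsDualFeasible (r : ι → ℝ) : Prop :=
  (∀ i, 0 ≤ r i) ∧
    ∀ I : Finset ι, 2 ≤ #I → #I ≤ Fintype.card ι - 1 → (#I : ℝ) - 1 ≤ ∑ i ∈ I, r i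

theorem isDualFeasible_fin_iff {n : ℕ} (r : Fin n → ℝ) :
    IsDualFeasible r ↔ (∀ i, 0 ≤ r i) ∧
      ∀ I : Finset (Fin n), 2 ≤ I.card → I.card ≤ n - 1 → (I.card : ℝ) - 1 ≤ ∑ i ∈ I, r i := by
  rw [IsDualFeasible, Fintype.card_fin]

theorem sum_mul_le_of_forall_sum_le_one {q t : ι → ℝ} {Q : ℝ} (hq : ∀ i, 0 ≤ q i)
    (hqQ : ∀ i, q i ≤ Q) (hQ : 0 ≤ Q) (ht : ∀ J : Finset ι, ∑ i ∈ J, t i ≤ 1) :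
    ∑ i, q i * t i ≤ Q := by
  calc ∑ i, q i * t i ≤ ∑ i, if 0 < t i then Q * t i else 0 := by
        refine sum_le_sum fun i _ => ?_
        split_ifs with h
        · exact mul_le_mul_of_nonneg_right (hqQ i) h.le
        · exact mul_nonpos_of_nonneg_of_nonpos (hq i) (not_lt.mp h)
    _ = Q * ∑ i ∈ univ.filter (fun i => 0 < t i), t i := by rw [sum_filter, mul_sum]; simp
    _ ≤ Q * 1 := mul_le_mul_of_nonneg_left (ht _) hQ
    _ = Q := mul_one Q

theorem sum_mul_le_of_forall_le {q t : ι → ℝ} {Q c : ℝ} (hqQ : ∀ i, q i ≤ Q)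
    (hct : ∀ i, c ≤ t i) :
    ∑ i, q i * t i ≤ c * ∑ i, q i + Q * (∑ i, t i - Fintype.card ι * c) := by
  calc ∑ i, q i * t i = ∑ i, (c * q i + q i * (t i - c)) := by congr! 1; ring
    _ ≤ ∑ i, (c * q i + Q * (t i - c)) :=
        sum_le_sum fun i _ => by gcongr; exacts [sub_nonneg.mpr (hct i), hqQ i]
    _ = _ := by simp [sum_add_distrib, ← mul_sum, sum_sub_distrib]

theorem isDualFeasible_const (hι : 2 ≤ Fintype.card ι) :
    IsDualFeasible fun _ : ι => ((Fintype.card ι : ℝ) - 2) / (Fintype.card ι - 1) := by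
  have hn : (2 : ℝ) ≤ Fintype.card ι := by exact_mod_cast hι
  refine ⟨fun _ => div_nonneg (by linarith) (by linarith), fun I _ hIn => ?_⟩
  have hIn' : (#I : ℝ) ≤ Fintype.card ι - 1 := by
    rw [← Nat.cast_one, ← Nat.cast_sub (by omega)]; exact_mod_cast hIn
  rw [sum_const, nsmul_eq_mul, mul_div_assoc', le_div_iff₀ (by linarith)]
  nlinarith

theorem isDualFeasible_ite [DecidableEq ι] (k : ι) :
    IsDualFeasible fun i : ι => if i = k then 0 else 1 := by
  refine ⟨fun i => by positivity, fun I _ _ => ?_⟩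
  have : #I ≤ #(I.erase k) + 1 := by have := pred_card_le_card_erase (s := I) (a := k); omega
  rw [sum_ite, sum_const_zero, zero_add, sum_const, nsmul_one, filter_ne']
  linarith [(by exact_mod_cast this : (#I : ℝ) ≤ #(I.erase k) + 1)]

namespace IsDualFeasible

variable {r : ι → ℝ}

theorem sum_one_sub_le_one (hr : IsDualFeasible r) {J : Finset ι} (hJ : J ≠ univ) :
    ∑ i ∈ J, (1 - r i) ≤ 1 := by
  have hJn : #J ≤ Fintype.card ι - 1 := Nat.le_sub_one_of_lt ((card_lt_iff_ne_univ J).2 hJ)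
  rw [sum_sub_distrib, sum_const, nsmul_one]
  rcases le_or_gt 2 #J with h2 | h1
  · linarith [hr.2 J h2 hJn]
  · have : (#J : ℝ) ≤ 1 := by exact_mod_cast Nat.lt_succ_iff.mp h1
    linarith [sum_nonneg fun i (_ : i ∈ J) => hr.1 i]

theorem sum_mul_one_sub_le_max (hr : IsDualFeasible r) (hι : 2 ≤ Fintype.card ι) {q : ι → ℝ}
    {Q : ℝ} (hq : ∀ i, 0 ≤ q i) (hqQ : ∀ i, q i ≤ Q) :
    ∑ i, q i * (1 - r i) ≤ max ((∑ i, q i) / (Fintype.card ι - 1)) Q := by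
  set T := ∑ i, (1 - r i)
  rcases le_or_gt T 1 with hT | hT
  · obtain ⟨i⟩ : Nonempty ι := Fintype.card_pos_iff.mp (by omega)
    refine (sum_mul_le_of_forall_sum_le_one hq hqQ ((hq i).trans (hqQ i)) fun J => ?_).trans
      (le_max_right _ _)
    by_cases hJ : J = univ
    · rwa [hJ]
    · exact hr.sum_one_sub_le_one hJ
  · have hlow : ∀ j, T - 1 ≤ 1 - r j := fun j => by
      classical
      have := hr.sum_one_sub_le_one (erase_ssubset (mem_univ j)).ne
      rw [sum_erase_eq_sub (mem_univ j)] at this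
      linarith
    have hTn : Fintype.card ι * (T - 1) ≤ T := by
      simpa only [sum_const, card_univ, nsmul_eq_mul] using sum_le_sum fun j (_ : j ∈ univ) => hlow j
    have hn : (1 : ℝ) < Fintype.card ι := by exact_mod_cast hι
    have hn1 : (Fintype.card ι : ℝ) - 1 ≠ 0 := by linarith
    calc ∑ i, q i * (1 - r i) ≤ (T - 1) * ∑ i, q i + Q * (T - Fintype.card ι * (T - 1)) :=
          sum_mul_le_of_forall_le hqQ hlow
      _ = ((Fintype.card ι - 1) * (T - 1)) * ((∑ i, q i) / (Fintype.card ι - 1)) +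
            (1 - (Fintype.card ι - 1) * (T - 1)) * Q := by
          field_simp
          ring
      _ ≤ _ := Convex.combo_le_max (𝕜 := ℝ) _ _ (by nlinarith) (by linarith) (by ring)

theorem min_le_sum_mul (hr : IsDualFeasible r) (hι : 2 ≤ Fintype.card ι) {q : ι → ℝ} {Q : ℝ}
    (hq : ∀ i, 0 ≤ q i) (hqQ : ∀ i, q i ≤ Q) :
    min (((Fintype.card ι : ℝ) - 2) / (Fintype.card ι - 1) * ∑ i, q i) (∑ i, q i - Q) ≤
      ∑ i, q i * r i := by
  have hn1 : (Fintype.card ι : ℝ) - 1 ≠ 0 := by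
    have : (2 : ℝ) ≤ Fintype.card ι := by exact_mod_cast hι
    linarith
  have hfrac : ((Fintype.card ι : ℝ) - 2) / (Fintype.card ι - 1) * ∑ i, q i =
      ∑ i, q i - (∑ i, q i) / (Fintype.card ι - 1) := by
    field_simp
    ring
  have hsplit : ∑ i, q i * r i = ∑ i, q i - ∑ i, q i * (1 - r i) := by
    simp only [mul_sub, mul_one, sum_sub_distrib, sub_sub_cancel]
  rw [hfrac, hsplit, min_sub_sub_left]
  exact sub_le_sub_left (hr.sum_mul_one_sub_le_max hι hq hqQ) _

end IsDualFeasible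

theorem exists_isDualFeasible_sum_mul_eq_min (hι : 2 ≤ Fintype.card ι) (q : ι → ℝ) (k : ι) :
    ∃ r : ι → ℝ, IsDualFeasible r ∧
      ∑ i, q i * r i =
        min (((Fintype.card ι : ℝ) - 2) / (Fintype.card ι - 1) * ∑ i, q i) (∑ i, q i - q k) ∧
      ((∀ i, r i = ((Fintype.card ι : ℝ) - 2) / (Fintype.card ι - 1)) ∨
        ∃ k, r k = 0 ∧ ∀ i, i ≠ k → r i = 1) := by
  classical
  rcases le_total (((Fintype.card ι : ℝ) - 2) / (Fintype.card ι - 1) * ∑ i, q i)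
    (∑ i, q i - q k) with h | h
  · refine ⟨_, isDualFeasible_const hι, ?_, Or.inl fun _ => rfl⟩
    rw [min_eq_left h, ← sum_mul, mul_comm]
  · refine ⟨_, isDualFeasible_ite k, ?_, Or.inr ⟨k, if_pos rfl, fun i hi => if_neg hi⟩⟩
    rw [min_eq_right h]
    simp [mul_ite, sum_ite, filter_ne']

end

theorem stmt4 (n : ℕ) (hn : 3 ≤ n) (q : Fin n → ℝ) (hq : ∀ i, q i ∈ Set.Icc (0 : ℝ) 1) :
    IsLeast
      {s : ℝ | ∃ r : Fin n → ℝ, (∀ i, 0 ≤ r i) ∧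
        (∀ I : Finset (Fin n), 2 ≤ I.card → I.card ≤ n - 1 →
          (I.card : ℝ) - 1 ≤ ∑ i ∈ I, r i) ∧
        s = ∑ i, q i * r i}
      (min (((n : ℝ) - 2) / ((n : ℝ) - 1) * ∑ i, q i)
        ((∑ i, q i) - Finset.univ.sup' (Finset.univ_nonempty_iff.mpr ⟨⟨0, by omega⟩⟩) q))
    ∧
    ∃ r : Fin n → ℝ, (∀ i, 0 ≤ r i) ∧
      (∀ I : Finset (Fin n), 2 ≤ I.card → I.card ≤ n - 1 →
        (I.card : ℝ) - 1 ≤ ∑ i ∈ I, r i) ∧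
      (∑ i, q i * r i
        = min (((n : ℝ) - 2) / ((n : ℝ) - 1) * ∑ i, q i)
            ((∑ i, q i) - Finset.univ.sup' (Finset.univ_nonempty_iff.mpr ⟨⟨0, by omega⟩⟩) q)) ∧
      ((∀ i, r i = ((n : ℝ) - 2) / ((n : ℝ) - 1)) ∨
        ∃ k, r k = 0 ∧ ∀ i, i ≠ k → r i = 1) := by
  have hι : 2 ≤ Fintype.card (Fin n) := by rw [Fintype.card_fin]; omega
  set Q := univ.sup' (univ_nonempty_iff.mpr ⟨⟨0, by omega⟩⟩) q
  obtain ⟨k, -, hk⟩ := exists_mem_eq_sup' (univ_nonempty_iff.mpr ⟨⟨0, by omega⟩⟩) q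
  have hqQ : ∀ i, q i ≤ Q := fun i => le_sup' q (mem_univ i)
  obtain ⟨r, hr, hval, hshape⟩ := exists_isDualFeasible_sum_mul_eq_min hι q k
  rw [Fintype.card_fin, ← hk] at hval
  rw [Fintype.card_fin] at hshape
  obtain ⟨hr0, hrI⟩ := (isDualFeasible_fin_iff r).1 hr
  refine ⟨⟨⟨r, hr0, hrI, hval.symm⟩, ?_⟩, ⟨r, hr0, hrI, hval, hshape⟩⟩
  rintro s ⟨r', hr0', hrI', rfl⟩
  simpa only [Fintype.card_fin] using
    ((isDualFeasible_fin_iff r').2 ⟨hr0', hrI'⟩).min_le_sum_mul hι (fun i => (hq i).1) hqQ
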